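/- Let φ be a smooth solution of ε φ_t = ε Δφ - W'(φ)/ε + g√(2W(φ)) on Ω × (0,T) with |g| ≤ d/R₀ and initial energy ∫_Ω (ε|∇φ₀|²/2 + W(φ₀)/ε) dx ≤ D₁. Then ∫₀^T ∫_Ω ε^{-1}(g√(2W(φ)))² dx dt ≤ 2 D₁ e^{(d²/R₀²)T} d² T / R₀². -/

import Mathlib

open MeasureTheory Set

/-- Laplacian of `f : ℝ^d → ℝ` as the sum of second partial derivatives. -/
noncomputable def lap {d : ℕ} (f : EuclideanSpace ℝ (Fin d) → ℝ)
    (x : EuclideanSpace ℝ (Fin d)) : ℝ :=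
  ∑ i : Fin d, fderiv ℝ (fun y => fderiv ℝ f y (EuclideanSpace.single i 1)) x
    (EuclideanSpace.single i 1)

/-- The fundamental cube `[0,1]^d`, representing the torus `(ℝ/ℤ)^d`. -/
def cube (d : ℕ) : Set (EuclideanSpace ℝ (Fin d)) :=
  {x | ∀ i, x i ∈ Set.Icc (0 : ℝ) 1}

namespace StmtAux

noncomputable abbrev pd {d : ℕ} (f : EuclideanSpace ℝ (Fin d) → ℝ) (i : Fin d)
    (x : EuclideanSpace ℝ (Fin d)) : ℝ := fderiv ℝ f x (EuclideanSpace.single i 1)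

lemma cube_eq_preimage (d : ℕ) :
    cube d = (MeasurableEquiv.toLp 2 (Fin d → ℝ)).symm ⁻¹' (Set.Icc 0 1) := by
  ext x
  simp only [cube, Set.mem_setOf_eq, Set.mem_preimage, Set.mem_Icc, Pi.le_def,
    MeasurableEquiv.coe_toLp_symm, Set.mem_Icc, forall_and]
  rfl

/-- Divergence theorem on the unit cube for periodic `C¹` vector fields. -/
lemma integral_div_cube_zero {n : ℕ} (F : Fin (n+1) → EuclideanSpace ℝ (Fin (n+1)) → ℝ)
    (hF : ∀ i, ContDiff ℝ 1 (F i))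
    (hper : ∀ i x, F i (x + EuclideanSpace.single i 1) = F i x) :
    ∫ x in cube (n+1), ∑ i, fderiv ℝ (F i) x (EuclideanSpace.single i 1) = 0 := by
  set L : EuclideanSpace ℝ (Fin (n+1)) ≃L[ℝ] (Fin (n+1) → ℝ) := EuclideanSpace.equiv _ ℝ
  set Ls : (Fin (n+1) → ℝ) →L[ℝ] EuclideanSpace ℝ (Fin (n+1)) := L.symm.toContinuousLinearMap with hLs
  set G : Fin (n+1) → (Fin (n+1) → ℝ) → ℝ := fun i y => F i (L.symm y) with hG
  have hGc : ∀ i, ContDiff ℝ 1 (G i) := fun i => (hF i).comp L.symm.contDiff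
  have hfd : ∀ (i) (y : Fin (n+1) → ℝ),
      HasFDerivAt (G i) ((fderiv ℝ (F i) (L.symm y)).comp Ls) y := by
    intro i y
    exact (((hF i).differentiable one_ne_zero (L.symm y)).hasFDerivAt).comp y L.symm.hasFDerivAt
  have key := integral_divergence_of_hasFDerivAt_off_countable' (n := n)
    (0 : Fin (n+1) → ℝ) 1 (by intro i; simp [Pi.le_def]) G
    (fun i y => (fderiv ℝ (F i) (L.symm y)).comp Ls) ∅ countable_empty
    (fun i => (hGc i).continuous.continuousOn)
    (fun x _ i => hfd i x)
    (by
      apply ContinuousOn.integrableOn_compact isCompact_Icc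
      apply Continuous.continuousOn
      apply continuous_finset_sum
      intro i _
      have : ∀ y, (fderiv ℝ (F i) (L.symm y)).comp Ls (Pi.single i 1)
          = fderiv ℝ (F i) (L.symm y) (EuclideanSpace.single i 1) := by
        intro y; rfl
      simp only [this]
      exact (((hF i).fderiv_right (m := 0) (by norm_num)).continuous.comp
        L.symm.continuous).clm_apply continuous_const)
  have hGper : ∀ (i : Fin (n+1)) (y : Fin (n+1) → ℝ), G i (y + Pi.single i 1) = G i y := by
    intro i y
    have h1 : L.symm (y + Pi.single i 1) = L.symm y + EuclideanSpace.single i 1 := by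
      rw [map_add]; rfl
    simp only [hG, h1, hper]
  have hins : ∀ (i : Fin (n+1)) (x : Fin n → ℝ),
      (i.insertNth ((1 : Fin (n+1) → ℝ) i) x : Fin (n+1) → ℝ)
        = (i.insertNth ((0 : Fin (n+1) → ℝ) i) x : Fin (n+1) → ℝ) + Pi.single i 1 := by
    intro i x
    funext j
    rcases eq_or_ne j i with rfl | hj
    · simp
    · obtain ⟨k, rfl⟩ := Fin.exists_succAbove_eq hj
      simp [Fin.insertNth_apply_succAbove, Pi.single_eq_of_ne (Fin.succAbove_ne i k)]
  rw [show (∑ i : Fin (n+1), ((∫ x in Set.Icc ((0:Fin (n+1)→ℝ) ∘ i.succAbove) ((1:Fin (n+1)→ℝ) ∘ i.succAbove), G i (i.insertNth ((1:Fin (n+1)→ℝ) i) x)) - ∫ x in Set.Icc ((0:Fin (n+1)→ℝ) ∘ i.succAbove) ((1:Fin (n+1)→ℝ) ∘ i.succAbove), G i (i.insertNth ((0:Fin (n+1)→ℝ) i) x))) = 0 by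
      apply Finset.sum_eq_zero
      intro i _
      rw [sub_eq_zero]
      apply setIntegral_congr_fun measurableSet_Icc
      intro x _
      show G i (i.insertNth ((1:Fin (n+1)→ℝ) i) x) = G i (i.insertNth ((0:Fin (n+1)→ℝ) i) x)
      rw [hins i x, hGper]] at key
  have htrans := (EuclideanSpace.volume_preserving_symm_measurableEquiv_toLp (Fin (n+1))).setIntegral_preimage_emb
    (MeasurableEquiv.toLp 2 (Fin (n+1) → ℝ)).symm.measurableEmbedding
    (fun y => ∑ i, fderiv ℝ (F i) (L.symm y) (EuclideanSpace.single i 1)) (Set.Icc 0 1)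
  rw [← cube_eq_preimage] at htrans
  have hcomp : ∀ x : EuclideanSpace ℝ (Fin (n+1)),
      (∑ i, fderiv ℝ (F i) (L.symm ((MeasurableEquiv.toLp 2 (Fin (n+1) → ℝ)).symm x))
        (EuclideanSpace.single i 1)) = ∑ i, fderiv ℝ (F i) x (EuclideanSpace.single i 1) := by
    intro x; rfl
  simp only [hcomp] at htrans
  rw [htrans]
  rw [← key]
  rfl

lemma fderiv_of_periodic {d : ℕ} (u : EuclideanSpace ℝ (Fin d) → ℝ)
    (hu : Differentiable ℝ u) (c : EuclideanSpace ℝ (Fin d))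
    (hp : ∀ x, u (x + c) = u x) (x : EuclideanSpace ℝ (Fin d)) :
    fderiv ℝ u (x + c) = fderiv ℝ u x := by
  have h1 : (fun y : EuclideanSpace ℝ (Fin d) => u (y + c)) = u := funext hp
  have h2 : HasFDerivAt (fun y : EuclideanSpace ℝ (Fin d) => u (y + c))
      ((fderiv ℝ u (x + c)).comp (ContinuousLinearMap.id ℝ _)) x :=
    (hu (x + c)).hasFDerivAt.comp x ((hasFDerivAt_id x).add_const c)
  rw [ContinuousLinearMap.comp_id] at h2
  rw [← h2.fderiv, h1]

lemma fderiv_periodic_gen {E : Type*} [NormedAddCommGroup E] [NormedSpace ℝ E]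
    (f : E → ℝ) (hf : Differentiable ℝ f) (c : E)
    (hp : ∀ x, f (x + c) = f x) (x : E) :
    fderiv ℝ f (x + c) = fderiv ℝ f x := by
  have h1 : (fun y : E => f (y + c)) = f := funext hp
  have h2 : HasFDerivAt (fun y : E => f (y + c))
      ((fderiv ℝ f (x + c)).comp (ContinuousLinearMap.id ℝ _)) x :=
    (hf (x + c)).hasFDerivAt.comp x ((hasFDerivAt_id x).add_const c)
  rw [ContinuousLinearMap.comp_id] at h2
  rw [← h2.fderiv, h1]

lemma isCompact_cube (d : ℕ) : IsCompact (cube d) := by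
  have : cube d = (EuclideanSpace.equiv (Fin d) ℝ).toHomeomorph ⁻¹' (Set.Icc 0 1) := by
    rw [cube_eq_preimage]; rfl
  rw [this]
  exact (EuclideanSpace.equiv (Fin d) ℝ).toHomeomorph.isCompact_preimage.2 isCompact_Icc

lemma contDiff_pd {d : ℕ} (u : EuclideanSpace ℝ (Fin d) → ℝ) (hu : ContDiff ℝ (⊤ : ℕ∞) u)
    (i : Fin d) : ContDiff ℝ (⊤ : ℕ∞) (pd u i) :=
  (hu.fderiv_right (by simp)).clm_apply contDiff_const

lemma continuous_lap {d : ℕ} (u : EuclideanSpace ℝ (Fin d) → ℝ) (hu : ContDiff ℝ (⊤ : ℕ∞) u) :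
    Continuous (lap u) := by
  have h : lap u = fun x => ∑ i, pd (pd u i) i x := rfl
  rw [h]
  exact continuous_finset_sum _ fun i _ =>
    (contDiff_pd (pd u i) (contDiff_pd u hu i) i).continuous

/-- Integration by parts on the cube for periodic functions. -/
lemma ibp {n : ℕ} (u v : EuclideanSpace ℝ (Fin (n+1)) → ℝ)
    (hu : ContDiff ℝ (⊤ : ℕ∞) u) (hv : ContDiff ℝ (⊤ : ℕ∞) v)
    (hup : ∀ x i, u (x + EuclideanSpace.single i 1) = u x)
    (hvp : ∀ x i, v (x + EuclideanSpace.single i 1) = v x) :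
    ∫ x in cube (n+1), (v x * lap u x + ∑ i, pd v i x * pd u i x) = 0 := by
  have hpdu : ∀ i, ContDiff ℝ (⊤ : ℕ∞) (pd u i) := fun i =>
    (hu.fderiv_right (by simp)).clm_apply contDiff_const
  set F : Fin (n+1) → EuclideanSpace ℝ (Fin (n+1)) → ℝ := fun i x => v x * pd u i x with hFdef
  have hF : ∀ i, ContDiff ℝ 1 (F i) := fun i => (hv.of_le (by simp)).mul ((hpdu i).of_le (by simp))
  have hper : ∀ i x, F i (x + EuclideanSpace.single i 1) = F i x := by
    intro i x
    have h1 : fderiv ℝ u (x + EuclideanSpace.single i 1) = fderiv ℝ u x :=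
      fderiv_of_periodic u (hu.differentiable (by simp)) _ (fun y => hup y i) x
    simp only [hFdef, pd, h1, hvp]
  have key := integral_div_cube_zero F hF hper
  have hptwise : ∀ x, (v x * lap u x + ∑ i, pd v i x * pd u i x)
      = ∑ i, fderiv ℝ (F i) x (EuclideanSpace.single i 1) := by
    intro x
    have hmul : ∀ i : Fin (n+1), fderiv ℝ (F i) x (EuclideanSpace.single i 1)
        = v x * fderiv ℝ (pd u i) x (EuclideanSpace.single i 1) + pd v i x * pd u i x := by
      intro i
      have h1 : HasFDerivAt (F i)
          (v x • fderiv ℝ (pd u i) x + pd u i x • fderiv ℝ v x) x :=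
        ((hv.differentiable (by simp) x).hasFDerivAt).mul
          (((hpdu i).differentiable (by simp) x).hasFDerivAt)
      rw [h1.fderiv]
      simp only [ContinuousLinearMap.add_apply, ContinuousLinearMap.coe_smul',
        Pi.smul_apply, smul_eq_mul, pd]
      ring
    rw [Finset.sum_congr rfl (fun i _ => hmul i), Finset.sum_add_distrib, ← Finset.mul_sum]
    rfl
  rw [show (fun x => v x * lap u x + ∑ i, pd v i x * pd u i x)
      = fun x => ∑ i, fderiv ℝ (F i) x (EuclideanSpace.single i 1) from funext hptwise]
  exact key

lemma norm_gradient_sq {d : ℕ} (h : EuclideanSpace ℝ (Fin d) → ℝ)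
    (x : EuclideanSpace ℝ (Fin d)) :
    ‖gradient h x‖ ^ 2 = ∑ i, pd h i x ^ 2 := by
  have hcoord : ∀ i, gradient h x i = pd h i x := by
    intro i
    have : (inner ℝ (gradient h x) (EuclideanSpace.single i (1:ℝ)) : ℝ)
        = fderiv ℝ h x (EuclideanSpace.single i 1) := by
      rw [gradient, InnerProductSpace.toDual_symm_apply]
    rw [EuclideanSpace.inner_single_right] at this
    simpa [pd] using this
  rw [PiLp.norm_sq_eq_of_L2]
  exact Finset.sum_congr rfl fun i _ => by rw [hcoord]; simp [Real.norm_eq_abs, sq_abs]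

end StmtAux

set_option maxHeartbeats 2000000 in
open StmtAux in
theorem stmt_19 (d : ℕ) (hd : 2 ≤ d) (ε R₀ T D₁ : ℝ)
    (hε : ε ∈ Set.Ioo (0 : ℝ) 1) (hR₀ : 0 < R₀) (hT : 0 < T) (hD₁ : 0 < D₁)
    (W : ℝ → ℝ) (hW : ∀ s, W s = (1 - s ^ 2) ^ 2 / 2)
    (g : EuclideanSpace ℝ (Fin d) → ℝ) (hg_smooth : ContDiff ℝ (⊤ : ℕ∞) g)
    (hg_per : ∀ x i, g (x + EuclideanSpace.single i 1) = g x)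
    (hg_bd : ∀ x, |g x| ≤ (d : ℝ) / R₀)
    (φ : EuclideanSpace ℝ (Fin d) → ℝ → ℝ)
    (hφ_smooth : ContDiff ℝ (⊤ : ℕ∞) (fun p : EuclideanSpace ℝ (Fin d) × ℝ => φ p.1 p.2))
    (hφ_per : ∀ x t i, φ (x + EuclideanSpace.single i 1) t = φ x t)
    (hPDE : ∀ x, ∀ t ∈ Set.Ioo 0 T,
      ε * deriv (fun s => φ x s) t =
        ε * lap (fun y => φ y t) x - deriv W (φ x t) / ε
          + g x * Real.sqrt (2 * W (φ x t)))
    (hE0 : (∫ x in cube d,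
        (ε * ‖gradient (fun y => φ y 0) x‖ ^ 2 / 2 + W (φ x 0) / ε)) ≤ D₁) :
    (∫ t in (0 : ℝ)..T, ∫ x in cube d,
        ε⁻¹ * (g x * Real.sqrt (2 * W (φ x t))) ^ 2)
      ≤ 2 * D₁ * Real.exp (((d : ℝ) ^ 2 / R₀ ^ 2) * T) * (d : ℝ) ^ 2 * T / R₀ ^ 2 := by
  obtain ⟨n, rfl⟩ : ∃ n, d = n + 1 := ⟨d - 1, by omega⟩
  have ε0 : (0:ℝ) < ε := hε.1
  set k : ℝ := ((n+1 : ℕ) : ℝ)^2 / R₀^2 with hkdef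
  have hk0 : 0 ≤ k := by positivity
  have hWC : ContDiff ℝ (⊤ : ℕ∞) W := by
    have : W = fun s => (1 - s ^ 2) ^ 2 / 2 := funext hW
    rw [this]
    exact ((contDiff_const.sub (contDiff_id.pow 2)).pow 2).div_const 2
  have hW0 : ∀ s, 0 ≤ W s := fun s => by rw [hW]; positivity
  have EEdef : True := trivial
  set Φ : EuclideanSpace ℝ (Fin (n+1)) × ℝ → ℝ := fun p => φ p.1 p.2 with hΦdef
  have hΦ : ContDiff ℝ (⊤ : ℕ∞) Φ := hφ_smooth
  -- generic composition lemmas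
  have comp1 : ∀ (f : EuclideanSpace ℝ (Fin (n+1)) × ℝ → ℝ), ContDiff ℝ (⊤ : ℕ∞) f → ∀ (x : EuclideanSpace ℝ (Fin (n+1))) (t : ℝ) (v : EuclideanSpace ℝ (Fin (n+1))),
      fderiv ℝ (fun y => f (y, t)) x v = fderiv ℝ f (x, t) (v, 0) := by
    intro f hf x t v
    have hg : HasFDerivAt (fun y : EuclideanSpace ℝ (Fin (n+1)) => (y, t))
        ((ContinuousLinearMap.id ℝ (EuclideanSpace ℝ (Fin (n+1)))).prod 0) x :=
      (hasFDerivAt_id x).prodMk (hasFDerivAt_const t x)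
    have h : HasFDerivAt (fun y => f (y, t))
        ((fderiv ℝ f (x, t)).comp ((ContinuousLinearMap.id ℝ (EuclideanSpace ℝ (Fin (n+1)))).prod 0)) x :=
      ((hf.differentiable (by simp) (x, t)).hasFDerivAt).comp x hg
    rw [h.fderiv]
    rfl
  have comp2 : ∀ (f : EuclideanSpace ℝ (Fin (n+1)) × ℝ → ℝ), ContDiff ℝ (⊤ : ℕ∞) f → ∀ (x : EuclideanSpace ℝ (Fin (n+1))) (t : ℝ),
      HasDerivAt (fun s => f (x, s)) (fderiv ℝ f (x, t) (0, 1)) t := by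
    intro f hf x t
    have hg : HasDerivAt (fun s : ℝ => ((x, s) : EuclideanSpace ℝ (Fin (n+1)) × ℝ)) ((0 : EuclideanSpace ℝ (Fin (n+1))), (1:ℝ)) t :=
      (hasDerivAt_const t x).prodMk (hasDerivAt_id t)
    have h : HasDerivAt (fun s => f (x, s)) (fderiv ℝ f (x, t) ((0 : EuclideanSpace ℝ (Fin (n+1))), (1:ℝ))) t :=
      ((hf.differentiable (by simp) (x, t)).hasFDerivAt).comp_hasDerivAt t hg
    exact h
  -- partial derivative fields
  set P : Fin (n+1) → EuclideanSpace ℝ (Fin (n+1)) × ℝ → ℝ :=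
    fun i p => fderiv ℝ Φ p (EuclideanSpace.single i 1, 0) with hPdef
  set Q : EuclideanSpace ℝ (Fin (n+1)) × ℝ → ℝ := fun p => fderiv ℝ Φ p (0, 1) with hQdef
  have hP : ∀ i, ContDiff ℝ (⊤ : ℕ∞) (P i) := fun i =>
    (hΦ.fderiv_right (by simp)).clm_apply contDiff_const
  have hQ : ContDiff ℝ (⊤ : ℕ∞) Q := (hΦ.fderiv_right (by simp)).clm_apply contDiff_const
  set DP : Fin (n+1) → EuclideanSpace ℝ (Fin (n+1)) × ℝ → ℝ := fun i p => fderiv ℝ (P i) p (0, 1) with hDPdef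
  have hDP : ∀ i, ContDiff ℝ (⊤ : ℕ∞) (DP i) := fun i =>
    ((hP i).fderiv_right (by simp)).clm_apply contDiff_const
  -- slices of φ are smooth
  have hslice : ∀ t : ℝ, ContDiff ℝ (⊤ : ℕ∞) (fun y => φ y t) := fun t =>
    hΦ.comp (contDiff_id.prodMk contDiff_const)
  have hQslice : ∀ t : ℝ, ContDiff ℝ (⊤ : ℕ∞) (fun y => Q (y, t)) := fun t =>
    hQ.comp (contDiff_id.prodMk contDiff_const)
  -- conversions
  have c1 : ∀ (t : ℝ) (i : Fin (n+1)) (x : EuclideanSpace ℝ (Fin (n+1))), pd (fun y => φ y t) i x = P i (x, t) :=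
    fun t i x => comp1 Φ hΦ x t _
  have c2 : ∀ (x : EuclideanSpace ℝ (Fin (n+1))) (t : ℝ), HasDerivAt (fun s => φ x s) (Q (x, t)) t :=
    fun x t => comp2 Φ hΦ x t
  -- symmetry of second derivatives
  have csym : ∀ (i : Fin (n+1)) (x : EuclideanSpace ℝ (Fin (n+1))) (t : ℝ),
      DP i (x, t) = pd (fun y => Q (y, t)) i x := by
    intro i x t
    set p : EuclideanSpace ℝ (Fin (n+1)) × ℝ := (x, t) with hp
    set D := fderiv ℝ (fderiv ℝ Φ) p with hDdef
    have hDf : HasFDerivAt (fderiv ℝ Φ) D p :=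
      (((hΦ.fderiv_right (m := (⊤ : ℕ∞)) (by simp)).differentiable (by simp)) p).hasFDerivAt
    have hsym := second_derivative_symmetric
      (fun y => ((hΦ.differentiable (by simp)) y).hasFDerivAt) hDf
      ((EuclideanSpace.single i 1 : EuclideanSpace ℝ (Fin (n+1))), (0:ℝ))
      ((0 : EuclideanSpace ℝ (Fin (n+1))), (1:ℝ))
    set A := ContinuousLinearMap.apply ℝ ℝ
      (((EuclideanSpace.single i 1 : EuclideanSpace ℝ (Fin (n+1))), (0:ℝ)) :
        EuclideanSpace ℝ (Fin (n+1)) × ℝ) with hAdef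
    set B := ContinuousLinearMap.apply ℝ ℝ
      ((((0 : EuclideanSpace ℝ (Fin (n+1))), (1:ℝ))) :
        EuclideanSpace ℝ (Fin (n+1)) × ℝ) with hBdef
    have hPi : HasFDerivAt (P i) (A.comp D) p := A.hasFDerivAt.comp p hDf
    have hQi : HasFDerivAt Q (B.comp D) p := B.hasFDerivAt.comp p hDf
    have h1 : DP i p = D ((0 : EuclideanSpace ℝ (Fin (n+1))), (1:ℝ))
        ((EuclideanSpace.single i 1 : EuclideanSpace ℝ (Fin (n+1))), (0:ℝ)) := by
      show fderiv ℝ (P i) p ((0 : EuclideanSpace ℝ (Fin (n+1))), (1:ℝ)) = _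
      rw [hPi.fderiv]; rfl
    have h2 : pd (fun y => Q (y, t)) i x
        = D ((EuclideanSpace.single i 1 : EuclideanSpace ℝ (Fin (n+1))), (0:ℝ))
          ((0 : EuclideanSpace ℝ (Fin (n+1))), (1:ℝ)) := by
      show fderiv ℝ (fun y => Q (y, t)) x (EuclideanSpace.single i 1) = _
      rw [comp1 Q hQ x t]
      show fderiv ℝ Q p ((EuclideanSpace.single i 1 : EuclideanSpace ℝ (Fin (n+1))), (0:ℝ)) = _
      rw [hQi.fderiv]; rfl
    rw [h1, h2, hsym]
  -- laplacian conversion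
  have clap : ∀ (t : ℝ) (x : EuclideanSpace ℝ (Fin (n+1))), lap (fun y => φ y t) x
      = ∑ i, fderiv ℝ (P i) (x, t) (EuclideanSpace.single i 1, 0) := by
    intro t x
    apply Finset.sum_congr rfl
    intro i _
    have h1 : (fun y => fderiv ℝ (fun z => φ z t) y (EuclideanSpace.single i 1))
        = fun y => P i (y, t) := funext fun y => c1 t i y
    show fderiv ℝ (fun y => fderiv ℝ (fun z => φ z t) y (EuclideanSpace.single i 1)) x
        (EuclideanSpace.single i 1) = _
    rw [h1, comp1 (P i) (hP i) x t _]
  -- periodicity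
  have hΦdiff : Differentiable ℝ Φ := hΦ.differentiable (by simp)
  have perΦ : ∀ (j : Fin (n+1)) (x : EuclideanSpace ℝ (Fin (n+1))) (t : ℝ),
      fderiv ℝ Φ (x + EuclideanSpace.single j 1, t) = fderiv ℝ Φ (x, t) := by
    intro j x t
    have hp : ∀ p : EuclideanSpace ℝ (Fin (n+1)) × ℝ,
        Φ (p + (EuclideanSpace.single j 1, (0:ℝ))) = Φ p := by
      rintro ⟨a, b⟩
      show φ (a + EuclideanSpace.single j 1) (b + 0) = φ a b
      rw [add_zero]; exact hφ_per a b j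
    have := fderiv_periodic_gen Φ hΦdiff (EuclideanSpace.single j 1, (0:ℝ)) hp (x, t)
    rwa [Prod.mk_add_mk, add_zero] at this
  have perQ : ∀ (j : Fin (n+1)) (x : EuclideanSpace ℝ (Fin (n+1))) (t : ℝ),
      Q (x + EuclideanSpace.single j 1, t) = Q (x, t) := by
    intro j x t
    show fderiv ℝ Φ (x + EuclideanSpace.single j 1, t) (0, 1) = fderiv ℝ Φ (x, t) (0, 1)
    rw [perΦ]
  -- energy integrand
  set e : EuclideanSpace ℝ (Fin (n+1)) × ℝ → ℝ :=
    fun p => ε * (∑ i, P i p ^ 2) / 2 + W (Φ p) / ε with hedef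
  set e' : EuclideanSpace ℝ (Fin (n+1)) × ℝ → ℝ :=
    fun p => ε * (∑ i, P i p * DP i p) + deriv W (Φ p) * Q p / ε with he'def
  have hdWc : Continuous (deriv W) := by
    have h : deriv W = fun y => fderiv ℝ W y 1 := rfl
    rw [h]
    exact ContDiff.continuous (n := (⊤ : ℕ∞)) ((hWC.fderiv_right (m := (⊤ : ℕ∞)) (by simp)).clm_apply contDiff_const)
  have hec : Continuous e := by
    apply Continuous.add
    · exact (continuous_const.mul
        (continuous_finset_sum _ fun i _ => ((hP i).continuous.pow 2))).div_const 2
    · exact (hWC.continuous.comp hΦ.continuous).div_const ε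
  have he'c : Continuous e' := by
    apply Continuous.add
    · exact continuous_const.mul
        (continuous_finset_sum _ fun i _ => ((hP i).continuous.mul ((hDP i).continuous)))
    · exact ((hdWc.comp hΦ.continuous).mul hQ.continuous).div_const ε
  -- time derivative of the energy integrand
  have hde : ∀ (x : EuclideanSpace ℝ (Fin (n+1))) (t : ℝ),
      HasDerivAt (fun s => e (x, s)) (e' (x, t)) t := by
    intro x t
    have h1 : ∀ i : Fin (n+1), HasDerivAt (fun s => P i (x, s)) (DP i (x, t)) t :=
      fun i => comp2 (P i) (hP i) x t
    have h2 : HasDerivAt (fun s => φ x s) (Q (x, t)) t := c2 x t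
    have h3 : HasDerivAt W (deriv W (φ x t)) (φ x t) :=
      ((hWC.differentiable (by simp)) _).hasDerivAt
    have h4 : HasDerivAt (fun s => W (φ x s)) (deriv W (φ x t) * Q (x, t)) t := h3.comp t h2
    have h5 : HasDerivAt (fun s => ∑ i, P i (x, s) ^ 2)
        (∑ i, 2 * P i (x, t) ^ 1 * DP i (x, t)) t :=
      HasDerivAt.fun_sum (fun i _ => (h1 i).pow 2)
    have key := ((h5.const_mul ε).div_const 2).add (h4.div_const ε)
    have heq : e' (x, t)
        = ε * (∑ i, 2 * P i (x, t) ^ 1 * DP i (x, t)) / 2 + deriv W (φ x t) * Q (x, t) / ε := by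
      have hss : (∑ i, 2 * P i (x,t) * DP i (x,t)) = 2 * ∑ i, P i (x,t) * DP i (x,t) := by
        rw [Finset.mul_sum]; exact Finset.sum_congr rfl fun i _ => by ring
      simp only [he'def, hΦdef, pow_one]
      rw [hss]; ring
    rw [heq]
    exact key
  -- energy
  haveI hfin : IsFiniteMeasure (volume.restrict (cube (n+1))) :=
    ⟨by rw [Measure.restrict_apply_univ]; exact (isCompact_cube (n+1)).measure_lt_top⟩
  have hmeas_cube : MeasurableSet (cube (n+1)) := (isCompact_cube _).isClosed.measurableSet
  set En : ℝ → ℝ := fun t => ∫ x in cube (n+1), e (x, t) with hEndef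
  set En' : ℝ → ℝ := fun t => ∫ x in cube (n+1), e' (x, t) with hEn'def
  have hEderiv : ∀ t₀ : ℝ, HasDerivAt En (En' t₀) t₀ := by
    intro t₀
    obtain ⟨C, hC⟩ := ((isCompact_cube (n+1)).prod (isCompact_Icc (a := t₀ - 1) (b := t₀ + 1))
      ).exists_bound_of_continuousOn he'c.continuousOn
    have main := hasDerivAt_integral_of_dominated_loc_of_deriv_le
      (μ := volume.restrict (cube (n+1)))
      (F := fun t x => e (x, t)) (F' := fun t x => e' (x, t)) (x₀ := t₀)
      (bound := fun _ => C) (Metric.ball_mem_nhds t₀ one_pos)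
      (Filter.Eventually.of_forall fun t =>
        (hec.comp (continuous_id.prodMk continuous_const)).aestronglyMeasurable)
      ((hec.comp (continuous_id.prodMk continuous_const)).continuousOn.integrableOn_compact
        (isCompact_cube (n+1)))
      ((he'c.comp (continuous_id.prodMk continuous_const)).aestronglyMeasurable)
      (ae_restrict_of_forall_mem hmeas_cube (fun x hx => by
        intro t ht
        apply hC (x, t)
        refine ⟨hx, ?_⟩
        have := Metric.mem_ball.1 ht
        rw [Real.dist_eq] at this
        constructor <;> [linarith [abs_lt.1 this |>.1]; linarith [abs_lt.1 this |>.2]]))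
      (integrable_const C)
      (Filter.Eventually.of_forall fun x t _ => hde x t)
    exact main.2
  have hEncont : Continuous En := by
    have : Differentiable ℝ En := fun t => (hEderiv t).differentiableAt
    exact this.continuous
  -- main differential inequality
  have hEn'le : ∀ t ∈ Set.Ioo (0:ℝ) T, En' t ≤ k * En t := by
    intro t ht
    have hibp0 : ∫ x in cube (n+1),
        (Q (x, t) * lap (fun y => φ y t) x
          + ∑ i, pd (fun y => Q (y, t)) i x * pd (fun y => φ y t) i x) = 0 :=
      ibp (fun y => φ y t) (fun y => Q (y, t)) (hslice t) (hQslice t)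
        (fun x i => hφ_per x t i) (fun x i => perQ i x t)
    set A1 : EuclideanSpace ℝ (Fin (n+1)) → ℝ := fun x =>
      Q (x, t) * lap (fun y => φ y t) x
        + ∑ i, pd (fun y => Q (y, t)) i x * pd (fun y => φ y t) i x with hA1def
    set A2 : EuclideanSpace ℝ (Fin (n+1)) → ℝ := fun x =>
      -(ε * Q (x, t) ^ 2) + g x * Real.sqrt (2 * W (φ x t)) * Q (x, t) with hA2def
    have hpt : ∀ x, e' (x, t) = ε * A1 x + A2 x := by
      intro x
      have hdQ : deriv (fun s => φ x s) t = Q (x, t) := (c2 x t).deriv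
      have hPDEx := hPDE x t ht
      rw [hdQ] at hPDEx
      have hεne : ε ≠ 0 := ne_of_gt ε0
      have hWd : deriv W (φ x t)
          = (ε * lap (fun y => φ y t) x + g x * Real.sqrt (2 * W (φ x t))
              - ε * Q (x, t)) * ε := by
        have h5 : deriv W (φ x t) / ε
            = ε * lap (fun y => φ y t) x + g x * Real.sqrt (2 * W (φ x t)) - ε * Q (x, t) := by
          linarith
        rw [div_eq_iff hεne] at h5
        exact h5
      have hsum : (∑ i, P i (x, t) * DP i (x, t))
          = ∑ i, pd (fun y => Q (y, t)) i x * pd (fun y => φ y t) i x :=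
        Finset.sum_congr rfl fun i _ => by rw [← c1 t i x, ← csym i x t]; ring
      simp only [he'def, hΦdef, hA1def, hA2def]
      rw [hsum, hWd]
      field_simp
      ring
    have hcontu : Continuous (fun y => φ y t) := (hslice t).continuous
    have hA1c : Continuous A1 := by
      apply Continuous.add
      · exact ((hQslice t).continuous).mul (continuous_lap _ (hslice t))
      · exact continuous_finset_sum _ fun i _ =>
          ((contDiff_pd _ (hQslice t) i).continuous).mul
            ((contDiff_pd _ (hslice t) i).continuous)
    have hA2c : Continuous A2 := by
      apply Continuous.add
      · exact ((continuous_const.mul (((hQslice t).continuous).pow 2))).neg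
      · exact ((hg_smooth.continuous).mul (Real.continuous_sqrt.comp
          (continuous_const.mul (hWC.continuous.comp hcontu)))).mul ((hQslice t).continuous)
    have hiA1 : IntegrableOn A1 (cube (n+1)) volume :=
      hA1c.continuousOn.integrableOn_compact (isCompact_cube _)
    have hiA2 : IntegrableOn A2 (cube (n+1)) volume :=
      hA2c.continuousOn.integrableOn_compact (isCompact_cube _)
    have hike : IntegrableOn (fun x => k * e (x, t)) (cube (n+1)) volume :=
      (continuous_const.mul
        (hec.comp (continuous_id.prodMk continuous_const))).continuousOn.integrableOn_compact
        (isCompact_cube _)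
    have hsplit : En' t = ε * (∫ x in cube (n+1), A1 x) + ∫ x in cube (n+1), A2 x := by
      have h1 : (∫ x in cube (n+1), e' (x, t)) = ∫ x in cube (n+1), (ε * A1 x + A2 x) :=
        integral_congr_ae (Filter.Eventually.of_forall hpt)
      rw [show En' t = ∫ x in cube (n+1), e' (x, t) from rfl, h1,
        integral_add (hiA1.const_mul ε) hiA2, integral_const_mul]
    rw [hsplit, hibp0, mul_zero, zero_add]
    have hA2le : ∀ x, A2 x ≤ k * e (x, t) := by
      intro x
      have hWnn : (0:ℝ) ≤ 2 * W (φ x t) := by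
        have := hW0 (φ x t); linarith
      have ha2 : (g x * Real.sqrt (2 * W (φ x t))) ^ 2 = g x ^ 2 * (2 * W (φ x t)) := by
        rw [mul_pow, Real.sq_sqrt hWnn]
      have hg2 : g x ^ 2 ≤ k := by
        rw [hkdef, ← sq_abs, ← div_pow]
        exact pow_le_pow_left₀ (abs_nonneg _) (hg_bd x) 2
      have h4ε : (0:ℝ) < 4 * ε := by linarith
      have step1 : A2 x ≤ g x ^ 2 * (2 * W (φ x t)) / (4 * ε) := by
        have hA2x : A2 x = -(ε * Q (x, t) ^ 2) + g x * Real.sqrt (2 * W (φ x t)) * Q (x, t) := rfl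
        rw [hA2x, ← ha2, le_div_iff₀ h4ε]
        nlinarith [sq_nonneg (2 * ε * Q (x, t) - g x * Real.sqrt (2 * W (φ x t))), ε0]
      have step2 : g x ^ 2 * (2 * W (φ x t)) / (4 * ε) ≤ k * (2 * W (φ x t)) / (4 * ε) := by
        gcongr
      have step3 : k * (2 * W (φ x t)) / (4 * ε) ≤ k * e (x, t) := by
        have he1 : W (φ x t) / ε ≤ e (x, t) := by
          simp only [hedef, hΦdef]
          have hsq : (0:ℝ) ≤ ε * ∑ i, P i (x, t) ^ 2 :=
            mul_nonneg ε0.le (Finset.sum_nonneg fun i _ => sq_nonneg _)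
          linarith
        have h3 : 0 ≤ k * (W (φ x t) / ε) :=
          mul_nonneg hk0 (div_nonneg (hW0 _) ε0.le)
        have h2 : k * (2 * W (φ x t)) / (4 * ε) = (k * (W (φ x t) / ε)) / 2 := by
          field_simp; ring
        rw [h2]
        calc (k * (W (φ x t) / ε)) / 2 ≤ k * (W (φ x t) / ε) := by linarith
          _ ≤ k * e (x, t) := mul_le_mul_of_nonneg_left he1 hk0
      exact step1.trans (step2.trans step3)
    calc (∫ x in cube (n+1), A2 x) ≤ ∫ x in cube (n+1), k * e (x, t) :=
          setIntegral_mono_on hiA2 hike hmeas_cube (fun x _ => hA2le x)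
      _ = k * En t := by exact integral_const_mul k _
  -- Gronwall
  have hexp : ∀ t : ℝ, HasDerivAt (fun s => Real.exp (-k * s)) (Real.exp (-k * t) * (-k)) t := by
    intro t
    have h1 : HasDerivAt (fun s : ℝ => -k * s) (-k) t := by
      simpa using (hasDerivAt_id t).const_mul (-k)
    exact (Real.hasDerivAt_exp (-k * t)).comp t h1
  set Gf : ℝ → ℝ := fun t => En t * Real.exp (-k * t) with hGfdef
  have hGd : ∀ t, HasDerivAt Gf
      (En' t * Real.exp (-k * t) + En t * (Real.exp (-k * t) * -k)) t :=
    fun t => (hEderiv t).mul (hexp t)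
  have hanti : AntitoneOn Gf (Set.Icc 0 T) := by
    apply antitoneOn_of_deriv_nonpos (convex_Icc 0 T)
    · exact (hEncont.mul (Real.continuous_exp.comp
        (continuous_const.mul continuous_id))).continuousOn
    · intro s _
      exact (hGd s).differentiableAt.differentiableWithinAt
    · intro s hs
      rw [interior_Icc] at hs
      rw [(hGd s).deriv]
      have h1 := hEn'le s hs
      have h2 := Real.exp_pos (-k * s)
      nlinarith [mul_le_mul_of_nonneg_right h1 h2.le]
  have hE0' : En 0 ≤ D₁ := by
    have hcongr : ∀ x, e (x, 0)
        = ε * ‖gradient (fun y => φ y 0) x‖ ^ 2 / 2 + W (φ x 0) / ε := by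
      intro x
      have hgr : ‖gradient (fun y => φ y 0) x‖ ^ 2 = ∑ i, pd (fun y => φ y 0) i x ^ 2 :=
        norm_gradient_sq _ x
      have hs2 : (∑ i, pd (fun y => φ y 0) i x ^ 2) = ∑ i, P i (x, 0) ^ 2 :=
        Finset.sum_congr rfl fun i _ => by rw [c1 0 i x]
      rw [show e (x, 0) = ε * (∑ i, P i (x, 0) ^ 2) / 2 + W (φ x 0) / ε from rfl, hgr, hs2]
    calc En 0 = ∫ x in cube (n+1),
          (ε * ‖gradient (fun y => φ y 0) x‖ ^ 2 / 2 + W (φ x 0) / ε) :=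
        integral_congr_ae (Filter.Eventually.of_forall hcongr)
      _ ≤ D₁ := hE0
  have hEbound : ∀ t ∈ Set.Icc (0:ℝ) T, En t ≤ D₁ * Real.exp (k * t) := by
    intro t htI
    have h0 : Gf t ≤ Gf 0 := hanti (Set.left_mem_Icc.2 hT.le) htI htI.1
    have hG0 : Gf 0 = En 0 := by
      rw [show Gf 0 = En 0 * Real.exp (-k * 0) from rfl]
      simp
    have h1 : En t * Real.exp (-k * t) ≤ D₁ := by
      have hGft : Gf t = En t * Real.exp (-k * t) := rfl
      linarith [hG0 ▸ h0, hE0']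
    have h2 := mul_le_mul_of_nonneg_right h1 (Real.exp_pos (k * t)).le
    rw [mul_assoc, ← Real.exp_add] at h2
    simpa using h2
  -- final estimate
  have hψc : Continuous (fun p : EuclideanSpace ℝ (Fin (n+1)) × ℝ =>
      ε⁻¹ * (g p.1 * Real.sqrt (2 * W (Φ p))) ^ 2) := by
    apply continuous_const.mul
    exact (((hg_smooth.continuous.comp continuous_fst).mul (Real.continuous_sqrt.comp
      (continuous_const.mul (hWC.continuous.comp hΦ.continuous))))).pow 2
  set B : ℝ → ℝ := fun t => ∫ x in cube (n+1),
    ε⁻¹ * (g x * Real.sqrt (2 * W (φ x t))) ^ 2 with hBdef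
  have hψb : ∀ t₀ : ℝ, ContinuousAt B t₀ := by
    intro t₀
    obtain ⟨C, hC⟩ := ((isCompact_cube (n+1)).prod (isCompact_Icc (a := t₀ - 1) (b := t₀ + 1))
      ).exists_bound_of_continuousOn hψc.continuousOn
    apply continuousAt_of_dominated (bound := fun _ => C)
    · exact Filter.Eventually.of_forall fun t =>
        ((hψc.comp (continuous_id.prodMk continuous_const))).aestronglyMeasurable
    · have hIoo : Set.Ioo (t₀ - 1) (t₀ + 1) ∈ nhds t₀ :=
        Ioo_mem_nhds (by linarith) (by linarith)
      filter_upwards [hIoo] with t htI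
      apply ae_restrict_of_forall_mem hmeas_cube
      intro x hx
      exact hC (x, t) ⟨hx, ⟨htI.1.le, htI.2.le⟩⟩
    · exact integrable_const C
    · exact Filter.Eventually.of_forall fun x =>
        ((hψc.comp (continuous_const.prodMk continuous_id)).continuousAt)
  have hBcont : Continuous B := continuous_iff_continuousAt.2 hψb
  have hBle : ∀ t : ℝ, B t ≤ 2 * k * En t := by
    intro t
    have hiψ : IntegrableOn (fun x => ε⁻¹ * (g x * Real.sqrt (2 * W (φ x t))) ^ 2)
        (cube (n+1)) volume :=
      ((hψc.comp (continuous_id.prodMk continuous_const))).continuousOn.integrableOn_compact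
        (isCompact_cube _)
    have hi2 : IntegrableOn (fun x => 2 * k * e (x, t)) (cube (n+1)) volume :=
      (continuous_const.mul
        (hec.comp (continuous_id.prodMk continuous_const))).continuousOn.integrableOn_compact
        (isCompact_cube _)
    have hptb : ∀ x ∈ cube (n+1),
        ε⁻¹ * (g x * Real.sqrt (2 * W (φ x t))) ^ 2 ≤ 2 * k * e (x, t) := by
      intro x _
      have hWnn : (0:ℝ) ≤ 2 * W (φ x t) := by have := hW0 (φ x t); linarith
      have ha2 : (g x * Real.sqrt (2 * W (φ x t))) ^ 2 = g x ^ 2 * (2 * W (φ x t)) := by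
        rw [mul_pow, Real.sq_sqrt hWnn]
      have hg2 : g x ^ 2 ≤ k := by
        rw [hkdef, ← sq_abs, ← div_pow]
        exact pow_le_pow_left₀ (abs_nonneg _) (hg_bd x) 2
      have he1 : W (φ x t) / ε ≤ e (x, t) := by
        simp only [hedef, hΦdef]
        have hsq : (0:ℝ) ≤ ε * ∑ i, P i (x, t) ^ 2 :=
          mul_nonneg ε0.le (Finset.sum_nonneg fun i _ => sq_nonneg _)
        linarith
      have hεinv : (0:ℝ) ≤ ε⁻¹ := by positivity
      calc ε⁻¹ * (g x * Real.sqrt (2 * W (φ x t))) ^ 2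
          = ε⁻¹ * (g x ^ 2 * (2 * W (φ x t))) := by rw [ha2]
        _ ≤ ε⁻¹ * (k * (2 * W (φ x t))) :=
            mul_le_mul_of_nonneg_left (mul_le_mul_of_nonneg_right hg2 hWnn) hεinv
        _ = 2 * k * (W (φ x t) / ε) := by ring
        _ ≤ 2 * k * e (x, t) := mul_le_mul_of_nonneg_left he1 (by positivity)
    calc B t ≤ ∫ x in cube (n+1), 2 * k * e (x, t) :=
          setIntegral_mono_on hiψ hi2 hmeas_cube hptb
      _ = 2 * k * En t := by exact integral_const_mul _ _
  have hM : ∀ t ∈ Set.Icc (0:ℝ) T, B t ≤ 2 * k * D₁ * Real.exp (k * T) := by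
    intro t htI
    have h3 : Real.exp (k * t) ≤ Real.exp (k * T) :=
      Real.exp_le_exp.2 (mul_le_mul_of_nonneg_left htI.2 hk0)
    have h4 : En t ≤ D₁ * Real.exp (k * T) :=
      (hEbound t htI).trans (mul_le_mul_of_nonneg_left h3 hD₁.le)
    calc B t ≤ 2 * k * En t := hBle t
      _ ≤ 2 * k * (D₁ * Real.exp (k * T)) :=
          mul_le_mul_of_nonneg_left h4 (by positivity)
      _ = 2 * k * D₁ * Real.exp (k * T) := by ring
  have hfinal : (∫ t in (0:ℝ)..T, B t) ≤ 2 * k * D₁ * Real.exp (k * T) * T := by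
    calc (∫ t in (0:ℝ)..T, B t)
        ≤ ∫ _t in (0:ℝ)..T, 2 * k * D₁ * Real.exp (k * T) :=
          intervalIntegral.integral_mono_on hT.le (hBcont.intervalIntegrable 0 T)
            intervalIntegrable_const (fun t htI => hM t htI)
      _ = 2 * k * D₁ * Real.exp (k * T) * T := by
          rw [intervalIntegral.integral_const]
          simp [smul_eq_mul]
          ring
  calc (∫ t in (0:ℝ)..T, ∫ x in cube (n+1),
        ε⁻¹ * (g x * Real.sqrt (2 * W (φ x t))) ^ 2)
      = ∫ t in (0:ℝ)..T, B t := rfl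
    _ ≤ 2 * k * D₁ * Real.exp (k * T) * T := hfinal
    _ = 2 * D₁ * Real.exp ((((n:ℝ)+1) ^ 2 / R₀ ^ 2) * T) * ((n:ℝ)+1) ^ 2 * T / R₀ ^ 2 := by
        rw [hkdef]
        push_cast
        ring
    _ = 2 * D₁ * Real.exp (((((n+1 : ℕ)):ℝ) ^ 2 / R₀ ^ 2) * T) * (((n+1 : ℕ)):ℝ) ^ 2 * T / R₀ ^ 2 := by
        push_cast
        ring
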